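/- The set of 18 linear-plus-constant functions ℤ^6 → ℤ given by L1 = 1 − λ2 − μ2 + ν1, L2 = 1 + ν2 − ν3, L3 = 1 + λ1 + μ1 − ν1, L4 = 1 + ν1 − ν2, L5 = 1 + λ2 + μ2 − ν3, L6 = 1 + ν3, L7 = 1 + μ1 − ν3, L8 = 1 + λ1 − ν3, L9 = 1 + λ1 − λ2, L10 = 1 + μ1 − μ2, L11 = 1 − λ2 + ν2, L12 = 1 − μ2 + ν2, L13 = 1 − λ1 + ν1, L14 = 1 − μ1 + ν1, L15 = 1 + μ2, L16 = 1 + λ2, L17 = 1 + λ1 + μ2 − ν2, L18 = 1 + λ2 + μ1 − ν2 (where ν3 = λ1 + λ2 + μ1 + μ2 − ν1 − ν2, and λ3 = μ3 = 0) is permuted by precomposition with the linear map X(λ1, λ2, μ1, μ2, ν1, ν2) = (λ1 + μ1 − ν2, λ2 + μ1 − ν2, ν2, μ2, ν1, μ1). Consequently min_{1 ≤ i ≤ 18} L_i is invariant under X. -/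
import Mathlib


/- Points of `ℤ^6` are `(λ1, λ2, μ1, μ2, ν1, ν2)` = `(p 0, ..., p 5)`, and
`ν3 = λ1 + λ2 + μ1 + μ2 − ν1 − ν2`. -/

def nu3 (p : Fin 6 → ℤ) : ℤ := p 0 + p 1 + p 2 + p 3 - p 4 - p 5

/-- The 18 affine functions `L1, ..., L18` (the polynomial formulas for the SL3
Littlewood–Richardson coefficient on the 18 chambers). -/
def L : Fin 18 → (Fin 6 → ℤ) → ℤ :=
  ![fun p => 1 - p 1 - p 3 + p 4,
    fun p => 1 + p 5 - nu3 p,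
    fun p => 1 + p 0 + p 2 - p 4,
    fun p => 1 + p 4 - p 5,
    fun p => 1 + p 1 + p 3 - nu3 p,
    fun p => 1 + nu3 p,
    fun p => 1 + p 2 - nu3 p,
    fun p => 1 + p 0 - nu3 p,
    fun p => 1 + p 0 - p 1,
    fun p => 1 + p 2 - p 3,
    fun p => 1 - p 1 + p 5,
    fun p => 1 - p 3 + p 5,
    fun p => 1 - p 0 + p 4,
    fun p => 1 - p 2 + p 4,
    fun p => 1 + p 3,
    fun p => 1 + p 1,
    fun p => 1 + p 0 + p 3 - p 5,
    fun p => 1 + p 1 + p 2 - p 5]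

/-- The linear map `X(λ1, λ2, μ1, μ2, ν1, ν2) = (λ1+μ1−ν2, λ2+μ1−ν2, ν2, μ2, ν1, μ1)`. -/
def X (p : Fin 6 → ℤ) : Fin 6 → ℤ :=
  ![p 0 + p 2 - p 5, p 1 + p 2 - p 5, p 5, p 3, p 4, p 2]


lemma X0 (p : Fin 6 → ℤ) : X p 0 = p 0 + p 2 - p 5 := rfl
lemma X1 (p : Fin 6 → ℤ) : X p 1 = p 1 + p 2 - p 5 := rfl
lemma X2 (p : Fin 6 → ℤ) : X p 2 = p 5 := rfl
lemma X3 (p : Fin 6 → ℤ) : X p 3 = p 3 := rfl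
lemma X4 (p : Fin 6 → ℤ) : X p 4 = p 4 := rfl
lemma X5 (p : Fin 6 → ℤ) : X p 5 = p 2 := rfl

def sigma : Fin 18 → Fin 18 :=
  ![7, 6, 2, 13, 12, 5, 1, 0, 8, 11, 10, 9, 4, 3, 14, 17, 16, 15]

lemma sigma_invol : ∀ i, sigma (sigma i) = i := by decide

lemma key : ∀ i p, L i (X p) = L (sigma i) p := by
  intro i p
  fin_cases i
  · show (1:ℤ) - (X p) 1 - (X p) 3 + (X p) 4 = 1 + p 0 - nu3 p
    simp only [X0, X1, X2, X3, X4, X5, nu3]; try ring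
  · show (1:ℤ) + (X p) 5 - nu3 (X p) = 1 + p 2 - nu3 p
    simp only [X0, X1, X2, X3, X4, X5, nu3]; try ring
  · show (1:ℤ) + (X p) 0 + (X p) 2 - (X p) 4 = 1 + p 0 + p 2 - p 4
    simp only [X0, X1, X2, X3, X4, X5, nu3]; try ring
  · show (1:ℤ) + (X p) 4 - (X p) 5 = 1 - p 2 + p 4
    simp only [X0, X1, X2, X3, X4, X5, nu3]; try ring
  · show (1:ℤ) + (X p) 1 + (X p) 3 - nu3 (X p) = 1 - p 0 + p 4
    simp only [X0, X1, X2, X3, X4, X5, nu3]; try ring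
  · show (1:ℤ) + nu3 (X p) = 1 + nu3 p
    simp only [X0, X1, X2, X3, X4, X5, nu3]; try ring
  · show (1:ℤ) + (X p) 2 - nu3 (X p) = 1 + p 5 - nu3 p
    simp only [X0, X1, X2, X3, X4, X5, nu3]; try ring
  · show (1:ℤ) + (X p) 0 - nu3 (X p) = 1 - p 1 - p 3 + p 4
    simp only [X0, X1, X2, X3, X4, X5, nu3]; try ring
  · show (1:ℤ) + (X p) 0 - (X p) 1 = 1 + p 0 - p 1
    simp only [X0, X1, X2, X3, X4, X5, nu3]; try ring
  · show (1:ℤ) + (X p) 2 - (X p) 3 = 1 - p 3 + p 5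
    simp only [X0, X1, X2, X3, X4, X5, nu3]; try ring
  · show (1:ℤ) - (X p) 1 + (X p) 5 = 1 - p 1 + p 5
    simp only [X0, X1, X2, X3, X4, X5, nu3]; try ring
  · show (1:ℤ) - (X p) 3 + (X p) 5 = 1 + p 2 - p 3
    simp only [X0, X1, X2, X3, X4, X5, nu3]; try ring
  · show (1:ℤ) - (X p) 0 + (X p) 4 = 1 + p 1 + p 3 - nu3 p
    simp only [X0, X1, X2, X3, X4, X5, nu3]; try ring
  · show (1:ℤ) - (X p) 2 + (X p) 4 = 1 + p 4 - p 5
    simp only [X0, X1, X2, X3, X4, X5, nu3]; try ring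
  · show (1:ℤ) + (X p) 3 = 1 + p 3
    simp only [X0, X1, X2, X3, X4, X5, nu3]; try ring
  · show (1:ℤ) + (X p) 1 = 1 + p 1 + p 2 - p 5
    simp only [X0, X1, X2, X3, X4, X5, nu3]; try ring
  · show (1:ℤ) + (X p) 0 + (X p) 3 - (X p) 5 = 1 + p 0 + p 3 - p 5
    simp only [X0, X1, X2, X3, X4, X5, nu3]; try ring
  · show (1:ℤ) + (X p) 1 + (X p) 2 - (X p) 5 = 1 + p 1
    simp only [X0, X1, X2, X3, X4, X5, nu3]; try ring

theorem X_permutes_formulas :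
    (Set.range (fun i => (L i) ∘ X) = Set.range L) ∧
      ∀ p : Fin 6 → ℤ,
        (Finset.univ.inf' Finset.univ_nonempty fun i => L i (X p)) =
          (Finset.univ.inf' Finset.univ_nonempty fun i => L i p) := by
  constructor
  · have h : (fun i => (L i) ∘ X) = L ∘ sigma := by
      funext i p
      exact key i p
    rw [h, Set.range_comp]
    have hs : Function.Surjective sigma := by decide
    rw [hs.range_eq, Set.image_univ]
  · intro p
    apply le_antisymm
    · refine Finset.le_inf' _ _ fun b _ => ?_
      calc (Finset.univ.inf' Finset.univ_nonempty fun i => L i (X p))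
          ≤ L (sigma b) (X p) := Finset.inf'_le _ (Finset.mem_univ _)
        _ = L b p := by rw [key, sigma_invol]
    · refine Finset.le_inf' _ _ fun b _ => ?_
      calc (Finset.univ.inf' Finset.univ_nonempty fun i => L i p)
          ≤ L (sigma b) p := Finset.inf'_le _ (Finset.mem_univ _)
        _ = L b (X p) := (key b p).symm
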